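/- If X has well-defined scattered Π₁-products and A is a homotopy cut-set for paths α, β : [0,1] → X, then either α ≃ β (path-homotopic), or there exists a nonempty perfect set P ⊆ A such that B = P ∪ {0,1} is a homotopy cut-set for α and β, and moreover whenever a component (c,d) of [0,1]\B contains a component (a,b) of [0,1]\A, we have α|_{[c,a]} ≃ β|_{[c,a]} when c < a and α|_{[b,d]} ≃ β|_{[b,d]} when b < d. -/

import Mathlib

open unitInterval

variable {X : Type*} [TopologicalSpace X]

noncomputable def subpath (α : C(ℝ, X)) (a b : ℝ) : Path (α a) (α b) where
  toFun t := α (a + (t : ℝ) * (b - a))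
  continuous_toFun := α.continuous.comp (by continuity)
  source' := by simp
  target' := by
    show α (a + ((1 : unitInterval) : ℝ) * (b - a)) = α b
    rw [Set.Icc.coe_one, one_mul]
    congr 1
    ring

def HomotopyCutSet (α β : C(ℝ, X)) (A : Set ℝ) : Prop :=
  IsClosed A ∧ IsNowhereDense A ∧ A ⊆ Set.Icc 0 1 ∧ (0:ℝ) ∈ A ∧ (1:ℝ) ∈ A ∧
  Set.EqOn α β A ∧
  ∀ a ∈ A, ∀ b ∈ A, a < b → A ∩ Set.Ioo a b = ∅ →
    ∀ (h1 : α a = β a) (h2 : α b = β b),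
      (subpath α a b).Homotopic ((subpath β a b).cast h1 h2)

def awSet (X : Type*) [TopologicalSpace X] : Set X :=
  {x | ∃ γ : ℕ → Path x x, (∀ n, ¬(γ n).Homotopic (Path.refl x)) ∧
    ∀ U ∈ nhds x, ∀ᶠ n in Filter.atTop, Set.range (γ n) ⊆ U}

def ScatteredSet {Y : Type*} [TopologicalSpace Y] (S : Set Y) : Prop :=
  ∀ T ⊆ S, T.Nonempty → ∃ x ∈ T, ∃ U : Set Y, IsOpen U ∧ U ∩ T = {x}

/-!
By Cantor–Bendixson, `A = V ∪ P` with `V` countable and `P` perfect. A countable closed subset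
of `ℝ` is scattered, since a nonempty perfect set in a complete metric space contains a copy of
the Cantor space. Hence whenever `c < d` lie in `A` and `A ∩ (c, d)` is countable, rescaling
`[c, d]` to `[0, 1]` turns `A ∩ [c, d]` into a scattered homotopy cut-set, and the hypothesis on
`X` gives `α|[c, d] ≃ β|[c, d]`. If `P = ∅` this applies to `[0, 1]` itself; otherwise every
interval between two points of `A` that lies in a gap of `P ∪ {0, 1}` meets `A` only in `V`.
-/

open Set

theorem Perfect.not_countable {Y : Type*} [MetricSpace Y] [CompleteSpace Y] {C : Set Y}
    (hC : Perfect C) (hne : C.Nonempty) : ¬C.Countable := by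
  intro hcount
  obtain ⟨f, hrange, -, hinj⟩ := hC.exists_nat_bool_injection hne
  have : Uncountable (ℕ → Bool) := by
    rw [← Cardinal.aleph0_lt_mk_iff]
    simpa using Cardinal.cantor Cardinal.aleph0
  have := hcount.to_subtype
  exact _root_.not_countable (hinj.codRestrict fun x => hrange ⟨x, rfl⟩).countable

theorem scatteredSet_of_countable {Y : Type*} [MetricSpace Y] [CompleteSpace Y] {S : Set Y}
    (hS : IsClosed S) (hcount : S.Countable) : ScatteredSet S := by
  intro T hTS hT
  by_contra! hiso
  have hT_preperfect : Preperfect T := by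
    refine preperfect_iff_nhds.2 fun x hx E hE => ?_
    obtain ⟨U, hUE, hUo, hxU⟩ := mem_nhds_iff.1 hE
    have hUT : (U ∩ T).Nontrivial := not_subsingleton_iff.1 fun hs =>
      hiso x hx U hUo (hs.eq_singleton_of_mem ⟨hxU, hx⟩)
    obtain ⟨y, hy, hyx⟩ := hUT.exists_ne x
    exact ⟨y, ⟨hUE hy.1, hy.2⟩, hyx⟩
  exact hT_preperfect.perfect_closure.not_countable hT.closure
    (hcount.mono (closure_minimal hTS hS))

theorem Homeomorph.isNowhereDense_preimage {Y Z : Type*} [TopologicalSpace Y]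
    [TopologicalSpace Z] (e : Y ≃ₜ Z) {s : Set Z} :
    IsNowhereDense (e ⁻¹' s) ↔ IsNowhereDense s := by
  rw [IsNowhereDense, IsNowhereDense, ← e.preimage_closure, ← e.preimage_interior,
    preimage_eq_empty_iff, e.surjective.range_eq, disjoint_univ]

def SubpathsHomotopic (α β : C(ℝ, X)) (a b : ℝ) : Prop :=
  ∀ (h1 : α a = β a) (h2 : α b = β b), (subpath α a b).Homotopic ((subpath β a b).cast h1 h2)

def WellDefinedScatteredProducts (X : Type*) [TopologicalSpace X] : Prop :=
  ∀ (α β : C(ℝ, X)) (A : Set ℝ), HomotopyCutSet α β A → ScatteredSet A →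
    SubpathsHomotopic α β 0 1

noncomputable def affineOrderIso {c d : ℝ} (h : c < d) : ℝ ≃o ℝ :=
  (OrderIso.mulRight₀ (d - c) (sub_pos.2 h)).trans (OrderIso.addLeft c)

section Rescaling

variable {c d : ℝ} (h : c < d)

@[simp]
theorem affineOrderIso_apply (t : ℝ) : affineOrderIso h t = c + t * (d - c) := rfl

@[simp]
theorem affineOrderIso_zero : affineOrderIso h 0 = c := by simp

@[simp]
theorem affineOrderIso_one : affineOrderIso h 1 = d := by simp

theorem subpath_comp_affineOrderIso (α : C(ℝ, X)) (p q : ℝ) :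
    subpath (α.comp (affineOrderIso h).toHomeomorph) p q =
      subpath α (affineOrderIso h p) (affineOrderIso h q) := by
  ext t
  change α (affineOrderIso h _) = α (affineOrderIso h p + _ * (affineOrderIso h q - _))
  simp only [affineOrderIso_apply]
  ring_nf

theorem subpathsHomotopic_comp_affineOrderIso {α β : C(ℝ, X)} {p q : ℝ} :
    SubpathsHomotopic (α.comp (affineOrderIso h).toHomeomorph)
        (β.comp (affineOrderIso h).toHomeomorph) p q ↔
      SubpathsHomotopic α β (affineOrderIso h p) (affineOrderIso h q) := by
  unfold SubpathsHomotopic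
  rw [subpath_comp_affineOrderIso, subpath_comp_affineOrderIso]
  rfl

end Rescaling

namespace HomotopyCutSet

variable {α β : C(ℝ, X)} {A : Set ℝ}

theorem isClosed (hA : HomotopyCutSet α β A) : IsClosed A := hA.1

theorem isNowhereDense (hA : HomotopyCutSet α β A) : IsNowhereDense A := hA.2.1

theorem subset_Icc (hA : HomotopyCutSet α β A) : A ⊆ Icc 0 1 := hA.2.2.1

theorem zero_mem (hA : HomotopyCutSet α β A) : (0 : ℝ) ∈ A := hA.2.2.2.1

theorem one_mem (hA : HomotopyCutSet α β A) : (1 : ℝ) ∈ A := hA.2.2.2.2.1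

theorem eqOn (hA : HomotopyCutSet α β A) : EqOn α β A := hA.2.2.2.2.2.1

theorem subpathsHomotopic (hA : HomotopyCutSet α β A) {a b : ℝ} (ha : a ∈ A) (hb : b ∈ A)
    (hab : a < b) (hgap : A ∩ Ioo a b = ∅) : SubpathsHomotopic α β a b :=
  hA.2.2.2.2.2.2 a ha b hb hab hgap

theorem of_subset (hA : HomotopyCutSet α β A) {B : Set ℝ} (hBA : B ⊆ A) (hB : IsClosed B)
    (h0 : (0 : ℝ) ∈ B) (h1 : (1 : ℝ) ∈ B)
    (hgap : ∀ c ∈ B, ∀ d ∈ B, c < d → B ∩ Ioo c d = ∅ → SubpathsHomotopic α β c d) :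
    HomotopyCutSet α β B :=
  ⟨hB, hA.isNowhereDense.mono hBA, hBA.trans hA.subset_Icc, h0, h1, hA.eqOn.mono hBA, hgap⟩

theorem comp_affineOrderIso (hA : HomotopyCutSet α β A) {c d : ℝ} (hc : c ∈ A) (hd : d ∈ A)
    (hcd : c < d) :
    HomotopyCutSet (α.comp (affineOrderIso hcd).toHomeomorph)
      (β.comp (affineOrderIso hcd).toHomeomorph) (affineOrderIso hcd ⁻¹' A ∩ Icc 0 1) := by
  set e := affineOrderIso hcd
  refine ⟨(hA.isClosed.preimage e.toHomeomorph.continuous).inter isClosed_Icc,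
    (e.toHomeomorph.isNowhereDense_preimage.2 hA.isNowhereDense).mono inter_subset_left,
    inter_subset_right, ⟨by simpa [e], by simp⟩, ⟨by simpa [e], by simp⟩,
    fun t ht => hA.eqOn ht.1, fun p hp q hq hpq hgap => ?_⟩
  refine (subpathsHomotopic_comp_affineOrderIso hcd).2
    (hA.subpathsHomotopic hp.1 hq.1 (e.lt_iff_lt.2 hpq) ?_)
  have hIoo : Ioo p q ⊆ Icc 0 1 := Ioo_subset_Icc_self.trans (Icc_subset_Icc hp.2.1 hq.2.2)
  rw [← e.image_Ioo, ← image_preimage_inter, ← inter_eq_left.2 hIoo, ← inter_assoc,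
    inter_right_comm, hgap, image_empty]

end HomotopyCutSet

theorem subpathsHomotopic_of_countable (hX : WellDefinedScatteredProducts X) {α β : C(ℝ, X)}
    {A : Set ℝ} (hA : HomotopyCutSet α β A) {c d : ℝ} (hc : c ∈ A) (hd : d ∈ A) (hcd : c < d)
    (hcount : (A ∩ Ioo c d).Countable) : SubpathsHomotopic α β c d := by
  set e := affineOrderIso hcd
  have hA' := hA.comp_affineOrderIso hc hd hcd
  have hcount' : (e ⁻¹' A ∩ Icc 0 1).Countable := by
    have hAcd : (A ∩ Icc c d).Countable := by
      refine (hcount.union (toFinite {c, d}).countable).mono fun x ⟨hxA, hx⟩ => ?_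
      rcases eq_endpoints_or_mem_Ioo_of_mem_Icc hx with rfl | rfl | hx
      · simp
      · simp
      · exact Or.inl ⟨hxA, hx⟩
    refine (hAcd.preimage e.injective).mono ?_
    rintro t ⟨htA, ht0, ht1⟩
    refine ⟨htA, ?_, ?_⟩
    · simpa [e] using e.monotone ht0
    · simpa [e] using e.monotone ht1
  have := (subpathsHomotopic_comp_affineOrderIso hcd).1
    (hX _ _ _ hA' (scatteredSet_of_countable hA'.isClosed hcount'))
  simpa [e] using this

/-- If `X` has well-defined scattered `Π₁`-products and `A` is a homotopy cut-set for paths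
`α, β`, then either `α ≃ β` or there is a nonempty perfect `P ⊆ A` such that `B = P ∪ {0,1}` is
a homotopy cut-set for `α, β` and whenever a component `(c,d)` of `[0,1]\B` contains a component
`(a,b)` of `[0,1]\A`, we have `α|_{[c,a]} ≃ β|_{[c,a]}` when `c < a` and
`α|_{[b,d]} ≃ β|_{[b,d]}` when `b < d`. -/
theorem stmt16 {X : Type*} [TopologicalSpace X]
    (hX : ∀ (α β : C(ℝ, X)) (A : Set ℝ), HomotopyCutSet α β A → ScatteredSet A →
      ∀ (h1 : α 0 = β 0) (h2 : α 1 = β 1),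
        (subpath α 0 1).Homotopic ((subpath β 0 1).cast h1 h2))
    (α β : C(ℝ, X)) (A : Set ℝ) (hA : HomotopyCutSet α β A) :
    (∀ (h1 : α 0 = β 0) (h2 : α 1 = β 1),
      (subpath α 0 1).Homotopic ((subpath β 0 1).cast h1 h2)) ∨
    ∃ P ⊆ A, P.Nonempty ∧ Perfect P ∧ HomotopyCutSet α β (P ∪ {0, 1}) ∧
      ∀ c ∈ P ∪ {0, 1}, ∀ d ∈ P ∪ {0, 1}, c < d → (P ∪ {0, 1}) ∩ Set.Ioo c d = ∅ →
        ∀ a ∈ A, ∀ b ∈ A, a < b → A ∩ Set.Ioo a b = ∅ → Set.Ioo a b ⊆ Set.Ioo c d →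
          (c < a → ∀ (h1 : α c = β c) (h2 : α a = β a),
            (subpath α c a).Homotopic ((subpath β c a).cast h1 h2)) ∧
          (b < d → ∀ (h1 : α b = β b) (h2 : α d = β d),
            (subpath α b d).Homotopic ((subpath β b d).cast h1 h2)) := by
  obtain ⟨V, P, hV, hP, hAVP⟩ := exists_countable_union_perfect_of_isClosed hA.isClosed
  rcases P.eq_empty_or_nonempty with rfl | hPne
  · left
    rw [union_empty] at hAVP
    subst hAVP
    exact subpathsHomotopic_of_countable hX hA hA.zero_mem hA.one_mem one_pos
      (hV.mono inter_subset_left)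
  right
  have hPA : P ⊆ A := hAVP ▸ subset_union_right
  have hBA : P ∪ {0, 1} ⊆ A :=
    union_subset hPA (by simp [insert_subset_iff, hA.zero_mem, hA.one_mem])
  have hgap : ∀ a ∈ A, ∀ b ∈ A, a < b → ∀ c d, (P ∪ {0, 1}) ∩ Ioo c d = ∅ →
      Ioo a b ⊆ Ioo c d → SubpathsHomotopic α β a b := by
    intro a ha b hb hab c d hPcd hsub
    refine subpathsHomotopic_of_countable hX hA ha hb hab (hV.mono fun x hx => ?_)
    exact (hAVP ▸ hx.1).resolve_right fun hxP => hPcd.subset ⟨Or.inl hxP, hsub hx.2⟩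
  refine ⟨P, hPA, hPne, hP, hA.of_subset hBA (hP.closed.union (toFinite _).isClosed) (by simp)
    (by simp) fun c hc d hd hcd hPcd => hgap c (hBA hc) d (hBA hd) hcd c d hPcd subset_rfl, ?_⟩
  intro c hc d hd _ hPcd a ha b hb hab _ hsub
  obtain ⟨hca, hbd⟩ := (Ioo_subset_Ioo_iff hab).1 hsub
  exact ⟨fun hca' => hgap c (hBA hc) a ha hca' c d hPcd
      (Ioo_subset_Ioo_right (hab.trans_le hbd).le),
    fun hbd' => hgap b hb d (hBA hd) hbd' c d hPcd (Ioo_subset_Ioo_left (hca.trans_lt hab).le)⟩
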